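/- Let l ≥ 3 and let a, b_1, …, b_l be integers such that b_i ≥ 0 for all i and a + b_i ≥ 0 for all i. Then, with indices cyclic mod l, the quantity A = l·a² + 2a·(b_1+⋯+b_l) + 2·Σ_{i=1}^{l} b_i b_{i+1} satisfies A ≥ 0. -/

import Mathlib

/-!
Grouping the terms of `A` along the edges of the polygon gives
`A = ∑ᵢ ((a + bᵢ) (a + bᵢ₊₁) + bᵢ bᵢ₊₁)`, a sum of products of nonnegative numbers.
-/

open Finset

theorem Finset.sum_range_comp_succ_mod {M : Type*} [AddCommMonoid M] (f : ℕ → M) (n : ℕ) :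
    ∑ i ∈ range n, f ((i + 1) % n) = ∑ i ∈ range n, f i := by
  rw [← Fin.sum_univ_eq_sum_range f, ← Fin.sum_univ_eq_sum_range (fun i => f ((i + 1) % n)),
    ← Equiv.sum_comp (finRotate n) (fun i => f i)]
  refine Fintype.sum_congr _ _ fun i => ?_
  cases n with
  | zero => exact i.elim0
  | succ n => rw [finRotate_apply, Fin.val_add, Fin.val_one', Nat.add_mod_mod]

theorem cyclic_quadratic_form_eq_sum_edges {R : Type*} [CommRing R] (l : ℕ) (a : R)
    (b : ℕ → R) :
    (l : R) * a ^ 2 + 2 * a * (∑ i ∈ range l, b i) + 2 * ∑ i ∈ range l, b i * b ((i + 1) % l)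
      = ∑ i ∈ range l, ((a + b i) * (a + b ((i + 1) % l)) + b i * b ((i + 1) % l)) := by
  have expand : ∀ i, (a + b i) * (a + b ((i + 1) % l)) + b i * b ((i + 1) % l)
      = a ^ 2 + a * b i + a * b ((i + 1) % l) + 2 * (b i * b ((i + 1) % l)) := fun i => by ring
  simp only [expand, sum_add_distrib, ← mul_sum, sum_range_comp_succ_mod b, sum_const,
    card_range, nsmul_eq_mul]
  ring

theorem stmt_1_general (l : ℕ) (a : ℤ) (b : ℕ → ℤ)
    (hb : ∀ i < l, 0 ≤ b i) (hab : ∀ i < l, 0 ≤ a + b i) :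
    0 ≤ (l : ℤ) * a ^ 2 + 2 * a * (∑ i ∈ Finset.range l, b i)
      + 2 * ∑ i ∈ Finset.range l, b i * b ((i + 1) % l) := by
  rw [cyclic_quadratic_form_eq_sum_edges]
  refine sum_nonneg fun i hi => ?_
  have hi : i < l := mem_range.mp hi
  have hnext : (i + 1) % l < l := Nat.mod_lt _ (by omega)
  exact add_nonneg (mul_nonneg (hab i hi) (hab _ hnext)) (mul_nonneg (hb i hi) (hb _ hnext))

/-- Nonnegativity of the quadratic form A(a,b) for the polygon graph P_l. -/
theorem stmt_1 (l : ℕ) (hl : 3 ≤ l) (a : ℤ) (b : ℕ → ℤ)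
    (hb : ∀ i < l, 0 ≤ b i) (hab : ∀ i < l, 0 ≤ a + b i) :
    0 ≤ (l : ℤ) * a ^ 2 + 2 * a * (∑ i ∈ Finset.range l, b i)
      + 2 * ∑ i ∈ Finset.range l, b i * b ((i + 1) % l) :=
  stmt_1_general l a b hb hab
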